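/- arXiv:2501.01751 — 3 statements merged into one kernel-verified Lean document; each statement's English description precedes it below -/
import Mathlib

section
/- Let n ≥ 2 and let a_1, …, a_n and b_1, …, b_n be real numbers satisfying Σ_i a_i = Σ_i b_i = 0, Σ_i a_i² = a and Σ_i b_i² = b. Then |Σ_i a_i b_i²| ≤ d(n) · √a · b, where d(n) = (n−2)/√(n(n−1)). -/
open Finset

private lemma sum_poly {n : ℕ} (b : Fin n → ℝ) (c4 c3 c2 c1 c0 : ℝ) :
    ∑ j, (c4 * (b j) ^ 4 + c3 * (b j) ^ 3 + c2 * (b j) ^ 2 + c1 * (b j) + c0)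
      = c4 * (∑ j, (b j) ^ 4) + c3 * (∑ j, (b j) ^ 3) + c2 * (∑ j, (b j) ^ 2)
        + c1 * (∑ j, b j) + n * c0 := by
  simp [Finset.sum_add_distrib, ← Finset.mul_sum, Finset.sum_const, Finset.card_univ,
    nsmul_eq_mul]

private lemma fourth_moment {n : ℕ} (hn : 2 ≤ n) (b : Fin n → ℝ) (hb : ∑ i, b i = 0) :
    (n : ℝ) * ((n : ℝ) - 1) * ∑ i, (b i) ^ 4
      ≤ ((n : ℝ) ^ 2 - 3 * n + 3) * (∑ i, (b i) ^ 2) ^ 2 := by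
  obtain rfl | hn3 : n = 2 ∨ 3 ≤ n := by omega
  · simp only [Fin.sum_univ_two] at hb ⊢
    have h1 : b 1 = -b 0 := by linarith
    rw [h1]
    norm_num
    nlinarith [sq_nonneg (b 0)]
  · set ν : ℝ := (n : ℝ) with hν
    have hν3 : (3 : ℝ) ≤ ν := by rw [hν]; exact_mod_cast hn3
    set s2 : ℝ := ∑ i, (b i) ^ 2 with hs2
    set s3 : ℝ := ∑ i, (b i) ^ 3 with hs3
    set s4 : ℝ := ∑ i, (b i) ^ 4 with hs4
    set Q : Fin n → Fin n → ℝ := fun i j =>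
      (ν - 1) * (ν - 2) * (b i * b j) + (ν - 1) * ((b i) ^ 2 + (b j) ^ 2) - s2 with hQ
    -- inner sums
    have inner_eq : ∀ i, ∑ j, (Q i j) ^ 2 =
        (ν - 1) ^ 2 * s4 + (2 * (ν - 1) * ((ν - 1) * (ν - 2) * b i)) * s3
          + (((ν - 1) * (ν - 2) * b i) ^ 2
              + 2 * (ν - 1) * ((ν - 1) * (b i) ^ 2 - s2)) * s2
          + ν * ((ν - 1) * (b i) ^ 2 - s2) ^ 2 := by
      intro i
      have h1 : ∀ j, (Q i j) ^ 2 =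
          ((ν - 1) ^ 2) * (b j) ^ 4 + (2 * (ν - 1) * ((ν - 1) * (ν - 2) * b i)) * (b j) ^ 3
            + (((ν - 1) * (ν - 2) * b i) ^ 2
                + 2 * (ν - 1) * ((ν - 1) * (b i) ^ 2 - s2)) * (b j) ^ 2
            + (2 * ((ν - 1) * (ν - 2) * b i) * ((ν - 1) * (b i) ^ 2 - s2)) * (b j)
            + ((ν - 1) * (b i) ^ 2 - s2) ^ 2 := by
        intro j; simp only [hQ]; ring
      rw [Finset.sum_congr rfl fun j _ => h1 j, sum_poly, hb]
      ring
    -- outer sum closed form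
    have F_eq : ∑ i, ∑ j, (Q i j) ^ 2 =
        2 * ν * (ν - 1) ^ 2 * s4
          + (((ν - 1) * (ν - 2)) ^ 2 + 2 * (ν - 1) ^ 2 - 4 * (ν - 1) * ν + ν ^ 2) * s2 ^ 2 := by
      have h2 : ∀ i, (∑ j, (Q i j) ^ 2) =
          (ν * (ν - 1) ^ 2) * (b i) ^ 4 + (0 : ℝ) * (b i) ^ 3
            + ((((ν - 1) * (ν - 2)) ^ 2 + 2 * (ν - 1) ^ 2 - 2 * ν * (ν - 1)) * s2) * (b i) ^ 2
            + (2 * (ν - 1) * ((ν - 1) * (ν - 2)) * s3) * (b i)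
            + ((ν - 1) ^ 2 * s4 - 2 * (ν - 1) * s2 ^ 2 + ν * s2 ^ 2) := by
        intro i; rw [inner_eq i]; ring
      rw [Finset.sum_congr rfl fun i _ => h2 i, sum_poly, hb, hs2, hs4]
      ring
    -- diagonal closed form
    have D_eq : ∑ i, (Q i i) ^ 2 =
        (ν * (ν - 1)) ^ 2 * s4 - 2 * (ν * (ν - 1)) * s2 ^ 2 + ν * s2 ^ 2 := by
      have h3 : ∀ i, (Q i i) ^ 2 =
          ((ν * (ν - 1)) ^ 2) * (b i) ^ 4 + (0 : ℝ) * (b i) ^ 3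
            + (-(2 * (ν * (ν - 1)) * s2)) * (b i) ^ 2 + (0 : ℝ) * (b i) + s2 ^ 2 := by
        intro i; simp only [hQ]; ring
      rw [Finset.sum_congr rfl fun i _ => h3 i, sum_poly, hs2, hs4]
      ring
    have hFD : ∑ i, (Q i i) ^ 2 ≤ ∑ i, ∑ j, (Q i j) ^ 2 :=
      Finset.sum_le_sum fun i _ =>
        Finset.single_le_sum (f := fun j => (Q i j) ^ 2) (fun j _ => sq_nonneg _)
          (Finset.mem_univ i)
    have key : 0 ≤ (ν - 1) * (ν - 2) *
        ((ν ^ 2 - 3 * ν + 3) * s2 ^ 2 - ν * (ν - 1) * s4) := by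
      have hID : (∑ i, ∑ j, (Q i j) ^ 2) - (∑ i, (Q i i) ^ 2)
          = (ν - 1) * (ν - 2) * ((ν ^ 2 - 3 * ν + 3) * s2 ^ 2 - ν * (ν - 1) * s4) := by
        rw [F_eq, D_eq]; ring
      linarith [hFD, hID.symm.le, hID.le]
    have hk : 0 < (ν - 1) * (ν - 2) := by nlinarith
    nlinarith [key, hk]

/-- Let `n ≥ 2` and let `a₁, …, aₙ` and `b₁, …, bₙ` be real numbers with
`∑ aᵢ = ∑ bᵢ = 0`. Then `|∑ aᵢ bᵢ²| ≤ d(n) √(∑ aᵢ²) (∑ bᵢ²)` where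
`d(n) = (n−2)/√(n(n−1))`. -/
theorem stmt_0 (n : ℕ) (hn : 2 ≤ n) (a b : Fin n → ℝ)
    (ha : ∑ i, a i = 0) (hb : ∑ i, b i = 0) :
    |∑ i, a i * (b i) ^ 2| ≤
      ((n : ℝ) - 2) / Real.sqrt (n * (n - 1)) *
        Real.sqrt (∑ i, (a i) ^ 2) * (∑ i, (b i) ^ 2) := by
  have hn2 : (2 : ℝ) ≤ (n : ℝ) := by exact_mod_cast hn
  have hn0 : (0 : ℝ) < (n : ℝ) := by linarith
  have hkpos : (0 : ℝ) < (n : ℝ) * ((n : ℝ) - 1) := by nlinarith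
  set P : ℝ := ∑ i, (b i) ^ 2 with hP
  set A : ℝ := ∑ i, (a i) ^ 2 with hA
  have hPnn : 0 ≤ P := Finset.sum_nonneg fun i _ => sq_nonneg _
  have hAnn : 0 ≤ A := Finset.sum_nonneg fun i _ => sq_nonneg _
  set c : Fin n → ℝ := fun i => (b i) ^ 2 - P / n with hc
  have h1 : ∑ i, a i * (b i) ^ 2 = ∑ i, a i * c i := by
    simp only [hc, mul_sub, Finset.sum_sub_distrib, ← Finset.sum_mul, ha, zero_mul, sub_zero]
  have h2 : (∑ i, a i * c i) ^ 2 ≤ A * ∑ i, (c i) ^ 2 :=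
    Finset.sum_mul_sq_le_sq_mul_sq _ _ _
  have h3 : ∑ i, (c i) ^ 2 = (∑ i, (b i) ^ 4) - P ^ 2 / n := by
    have hx : ∀ i, (c i) ^ 2 = (1 : ℝ) * (b i) ^ 4 + (0 : ℝ) * (b i) ^ 3
        + (-(2 * (P / n))) * (b i) ^ 2 + (0 : ℝ) * (b i) + (P / n) ^ 2 := by
      intro i; simp only [hc]; ring
    rw [Finset.sum_congr rfl fun i _ => hx i, sum_poly, ← hP]
    field_simp
    ring
  have h4 := fourth_moment hn b hb
  rw [← hP] at h4
  have hd : ∑ i, (c i) ^ 2 ≤ ((n : ℝ) - 2) ^ 2 / ((n : ℝ) * ((n : ℝ) - 1)) * P ^ 2 := by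
    rw [h3, div_mul_eq_mul_div, le_div_iff₀ hkpos]
    have e : ((∑ i, (b i) ^ 4) - P ^ 2 / n) * ((n : ℝ) * ((n : ℝ) - 1))
        = (n : ℝ) * ((n : ℝ) - 1) * (∑ i, (b i) ^ 4) - ((n : ℝ) - 1) * P ^ 2 := by
      field_simp
    rw [e]
    nlinarith [h4]
  have hRnn : 0 ≤ ((n : ℝ) - 2) / Real.sqrt ((n : ℝ) * ((n : ℝ) - 1)) * Real.sqrt A * P :=
    mul_nonneg (mul_nonneg (div_nonneg (by linarith) (Real.sqrt_nonneg _))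
      (Real.sqrt_nonneg _)) hPnn
  have eq2 : A * (((n : ℝ) - 2) ^ 2 / ((n : ℝ) * ((n : ℝ) - 1)) * P ^ 2)
      = (((n : ℝ) - 2) / Real.sqrt ((n : ℝ) * ((n : ℝ) - 1)) * Real.sqrt A * P) ^ 2 := by
    rw [mul_pow, mul_pow, div_pow, Real.sq_sqrt hkpos.le, Real.sq_sqrt hAnn]
    ring
  calc |∑ i, a i * (b i) ^ 2| = |∑ i, a i * c i| := by rw [h1]
    _ = Real.sqrt ((∑ i, a i * c i) ^ 2) := (Real.sqrt_sq_eq_abs _).symm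
    _ ≤ Real.sqrt (A * ∑ i, (c i) ^ 2) := Real.sqrt_le_sqrt h2
    _ ≤ Real.sqrt (A * (((n : ℝ) - 2) ^ 2 / ((n : ℝ) * ((n : ℝ) - 1)) * P ^ 2)) :=
        Real.sqrt_le_sqrt (mul_le_mul_of_nonneg_left hd hAnn)
    _ = ((n : ℝ) - 2) / Real.sqrt ((n : ℝ) * ((n : ℝ) - 1)) * Real.sqrt A * P := by
        rw [eq2, Real.sqrt_sq hRnn]
end

section
/- Let n ≥ 2 and let B and C be real symmetric n×n matrices with tr B = 0 and tr C = 0. Then |tr(B·C·C)| ≤ d(n) · ‖B‖_F · ‖C‖_F², where d(n) = (n−2)/√(n(n−1)). -/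
open Finset in
theorem scalar_quartic {n : ℕ} (hn : 2 ≤ n) (l : Fin n → ℝ) (h1 : ∑ i, l i = 0) :
    (n:ℝ) * ((n:ℝ)-1) * ∑ i, l i ^ 4 ≤ ((n:ℝ)^2 - 3*(n:ℝ) + 3) * (∑ i, l i ^ 2)^2 := by
  set p1 : ℝ := ∑ i, l i with hp1
  set p2 : ℝ := ∑ i, l i ^ 2 with hp2
  set p3 : ℝ := ∑ i, l i ^ 3 with hp3
  set p4 : ℝ := ∑ i, l i ^ 4 with hp4
  have key : ∑ i, ∑ j, (l i - l j)^2 * (l i + l j)^2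
      ≤ ∑ i, ∑ j, ((n:ℝ)-2) * ((l i - l j)^2 * (p2 - l i^2 - l j^2)) := by
    refine Finset.sum_le_sum fun i _ => Finset.sum_le_sum fun j _ => ?_
    rcases eq_or_ne i j with rfl | hij
    · simp
    · have hsub : ({i, j} : Finset (Fin n)) ⊆ univ := subset_univ _
      have hcard : ((univ \ {i, j} : Finset (Fin n)).card : ℝ) = (n:ℝ) - 2 := by
        rw [Finset.card_sdiff_of_subset hsub, Finset.card_univ, Fintype.card_fin,
          Finset.card_pair hij, Nat.cast_sub hn]
        norm_num
      have hsum : ∑ k ∈ univ \ {i, j}, l k = -(l i + l j) := by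
        rw [Finset.sum_sdiff_eq_sub hsub, ← hp1, h1, Finset.sum_pair hij]; ring
      have hsq : ∑ k ∈ univ \ {i, j}, (l k)^2 = p2 - l i^2 - l j^2 := by
        rw [Finset.sum_sdiff_eq_sub hsub, Finset.sum_pair hij, hp2]; ring
      have cs := sq_sum_le_card_mul_sum_sq (s := univ \ {i, j}) (f := l)
      rw [hsum, hsq, hcard] at cs
      have cs' : (l i + l j)^2 ≤ ((n:ℝ)-2) * (p2 - l i^2 - l j^2) := by
        calc (l i + l j)^2 = (-(l i + l j))^2 := by ring
          _ ≤ _ := cs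
      calc (l i - l j)^2 * (l i + l j)^2
          ≤ (l i - l j)^2 * (((n:ℝ)-2) * (p2 - l i^2 - l j^2)) :=
            mul_le_mul_of_nonneg_left cs' (sq_nonneg _)
        _ = ((n:ℝ)-2) * ((l i - l j)^2 * (p2 - l i^2 - l j^2)) := by ring
  have eL : ∑ i, ∑ j, (l i - l j)^2 * (l i + l j)^2 = 2*(n:ℝ)*p4 - 2*p2^2 := by
    have inner : ∀ i, ∑ j, (l i - l j)^2 * (l i + l j)^2
        = (n:ℝ)*l i^4 - (2*l i^2)*p2 + p4 := by
      intro i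
      have h : ∀ j, (l i - l j)^2 * (l i + l j)^2
          = (l i^4 - (2*l i^2) * l j^2) + l j^4 := fun j => by ring
      rw [Finset.sum_congr rfl fun j _ => h j, Finset.sum_add_distrib,
        Finset.sum_sub_distrib, Finset.sum_const, ← Finset.mul_sum, Finset.card_univ,
        Fintype.card_fin, nsmul_eq_mul, ← hp2, ← hp4]
    rw [Finset.sum_congr rfl fun i _ => inner i, Finset.sum_add_distrib,
      Finset.sum_sub_distrib, ← Finset.mul_sum, ← Finset.sum_mul,
      Finset.sum_const, Finset.card_univ, Fintype.card_fin, nsmul_eq_mul]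
    have a : (∑ i, 2 * l i ^ 2) = 2 * p2 := by rw [← Finset.mul_sum, ← hp2]
    rw [a, ← hp4]; ring
  have eR : ∑ i, ∑ j, ((n:ℝ)-2) * ((l i - l j)^2 * (p2 - l i^2 - l j^2))
      = ((n:ℝ)-2) * (2*((n:ℝ)-1)*p2^2 - 2*(n:ℝ)*p4) := by
    have inner : ∀ i, ∑ j, (l i - l j)^2 * (p2 - l i^2 - l j^2)
        = (n:ℝ)*(p2*l i^2) + p2*p2 - (2*(p2*l i))*p1 - (n:ℝ)*l i^4 - p4
          - (2*l i^2)*p2 + (2*l i^3)*p1 + (2*l i)*p3 := by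
      intro i
      have h : ∀ j, (l i - l j)^2 * (p2 - l i^2 - l j^2)
          = (((((((p2*l i^2 + p2*(l j^2)) - (2*(p2*l i))*l j) - l i^4) - l j^4)
            - (2*l i^2)*(l j^2)) + (2*l i^3)*l j) + (2*l i)*(l j^3)) := fun j => by ring
      rw [Finset.sum_congr rfl fun j _ => h j]
      simp only [Finset.sum_add_distrib, Finset.sum_sub_distrib, ← Finset.mul_sum,
        Finset.sum_const, Finset.card_univ, Fintype.card_fin, nsmul_eq_mul,
        ← hp1, ← hp2, ← hp3, ← hp4]
      ring
    simp_rw [← Finset.mul_sum]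
    congr 1
    rw [Finset.sum_congr rfl fun i _ => inner i]
    have inner2 : ∀ i : Fin n, ↑n * (p2 * l i ^ 2) + p2 * p2 - 2 * (p2 * l i) * p1 - ↑n * l i ^ 4
        - p4 - 2 * l i ^ 2 * p2 + 2 * l i ^ 3 * p1 + 2 * l i * p3
        = (((n:ℝ)*p2)*(l i^2) + p2*p2 - (n:ℝ)*(l i^4) - p4 - (2*p2)*(l i^2)) + (2*p3)*(l i) := by
      intro i; rw [h1]; ring
    rw [Finset.sum_congr rfl fun i _ => inner2 i]
    simp only [Finset.sum_add_distrib, Finset.sum_sub_distrib, ← Finset.mul_sum,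
      Finset.sum_const, Finset.card_univ, Fintype.card_fin, nsmul_eq_mul,
      ← hp1, ← hp2, ← hp4]
    rw [h1]; ring
  rw [eL, eR] at key
  nlinarith [key]

set_option maxHeartbeats 1000000 in
open Finset Matrix in
/-- Let `n ≥ 2` and let `B`, `C` be real symmetric `n × n` matrices with
`tr B = tr C = 0`. Then `|tr (B C C)| ≤ d(n) ‖B‖_F ‖C‖_F²`, where
`‖·‖_F` is the Frobenius norm and `d(n) = (n−2)/√(n(n−1))`. -/
theorem stmt_1 (n : ℕ) (hn : 2 ≤ n) (B C : Matrix (Fin n) (Fin n) ℝ)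
    (hB : B.IsSymm) (hC : C.IsSymm)
    (htrB : B.trace = 0) (htrC : C.trace = 0) :
    |(B * C * C).trace| ≤
      ((n : ℝ) - 2) / Real.sqrt (n * (n - 1)) *
        Real.sqrt (∑ i, ∑ j, (B i j) ^ 2) *
        (Real.sqrt (∑ i, ∑ j, (C i j) ^ 2)) ^ 2 := by
  have hn2 : (2:ℝ) ≤ (n:ℝ) := by exact_mod_cast hn
  -- spectral theory for C
  have hCH : C.IsHermitian := by
    rw [Matrix.IsHermitian, Matrix.conjTranspose_eq_transpose_of_trivial]; exact hC
  set ev : Fin n → ℝ := hCH.eigenvalues with hev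
  set U : Matrix (Fin n) (Fin n) ℝ := (hCH.eigenvectorUnitary : Matrix (Fin n) (Fin n) ℝ) with hUdef
  have hU1 : U * star U = 1 := Matrix.mem_unitaryGroup_iff.mp hCH.eigenvectorUnitary.2
  have hU2 : star U * U = 1 := Matrix.mem_unitaryGroup_iff'.mp hCH.eigenvectorUnitary.2
  have hspec : C = U * Matrix.diagonal ev * star U := by
    have h := hCH.spectral_theorem
    rw [show RCLike.ofReal ∘ ev = ev from funext fun i => rfl] at h
    exact h
  have hpow : ∀ k : ℕ, C ^ k = U * (Matrix.diagonal ev) ^ k * star U := by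
    intro k; induction k with
    | zero => simpa [pow_zero] using hU1.symm
    | succ k ih =>
      calc C ^ (k+1) = C ^ k * C := pow_succ C k
        _ = (U * (Matrix.diagonal ev) ^ k * star U) * (U * Matrix.diagonal ev * star U) := by
            rw [ih, ← hspec]
        _ = U * (Matrix.diagonal ev) ^ k * ((star U * U) * (Matrix.diagonal ev * star U)) := by
            simp only [Matrix.mul_assoc]
        _ = U * (Matrix.diagonal ev) ^ (k+1) * star U := by
            rw [hU2, Matrix.one_mul, pow_succ]
            simp only [Matrix.mul_assoc]
  have htr : ∀ k : ℕ, (C ^ k).trace = ∑ i, ev i ^ k := by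
    intro k
    rw [hpow k, Matrix.trace_mul_cycle, hU2, Matrix.one_mul,
      Matrix.diagonal_pow, Matrix.trace_diagonal]
    simp
  have hev1 : ∑ i, ev i = 0 := by
    have h := htr 1
    rw [pow_one, htrC] at h
    simpa using h.symm
  -- basic trace identities via entries
  have trace_entries : ∀ X Y : Matrix (Fin n) (Fin n) ℝ,
      (X * Y).trace = ∑ i, ∑ j, X i j * Y j i := by
    intro X Y; simp [Matrix.trace, Matrix.diag, Matrix.mul_apply]
  have hCC_symm : ∀ i j, (C * C) j i = (C * C) i j := by
    intro i j
    simp only [Matrix.mul_apply]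
    exact Finset.sum_congr rfl fun k _ => by rw [hC.apply k j, hC.apply i k, mul_comm]
  set t : ℝ := ∑ i, ev i ^ 2 with ht
  have hC2 : (C * C).trace = t := by rw [← pow_two, htr 2]
  have hC4 : ((C * C) * (C * C)).trace = ∑ i, ev i ^ 4 := by
    have : (C * C) * (C * C) = C ^ 4 := by
      rw [show (4:ℕ) = 2 + 2 from rfl, pow_add, pow_two]
    rw [this, htr 4]
  have hSC : (∑ i, ∑ j, (C i j) ^ 2) = t := by
    rw [← hC2, trace_entries]
    exact Finset.sum_congr rfl fun i _ => Finset.sum_congr rfl fun j _ => by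
      rw [hC.apply j i, pow_two]
  have ht0 : 0 ≤ t := by
    rw [ht]; positivity
  -- the traceless part of C²
  set e : Fin n → Fin n → ℝ :=
    fun i j => (C * C) i j - (if i = j then t / n else 0) with hE
  have hn0 : (0:ℝ) < (n:ℝ) := by linarith
  have key1 : ∑ i, ∑ j, B i j * e i j = (B * C * C).trace := by
    have h1 : (B * C * C).trace = ∑ i, ∑ j, B i j * (C * C) i j := by
      rw [Matrix.mul_assoc, trace_entries]
      exact Finset.sum_congr rfl fun i _ => Finset.sum_congr rfl fun j _ => by
        rw [hCC_symm]
    have h2 : ∀ i, ∑ j, B i j * (if i = j then t / n else 0) = B i i * (t / n) := by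
      intro i
      rw [Finset.sum_eq_single i]
      · simp
      · intro b _ hb; simp [Ne.symm hb]
      · simp
    simp only [hE, mul_sub, Finset.sum_sub_distrib, h2]
    rw [← Finset.sum_mul]
    have : ∑ i, B i i = 0 := htrB
    rw [show (∑ i, B i i) = B.trace from rfl, htrB, h1]
    ring
  have key2 : ∑ i, ∑ j, e i j ^ 2 = (∑ i, ev i ^ 4) - t ^ 2 / n := by
    have hsq : ∀ i j, e i j ^ 2 = (C*C) i j * (C*C) i j
        - 2 * ((C*C) i j * (if i = j then t / n else 0))
        + (if i = j then t / n else 0) * (if i = j then t / n else 0) := by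
      intro i j; rw [hE]; ring
    simp only [hsq, Finset.sum_add_distrib, Finset.sum_sub_distrib, ← Finset.mul_sum]
    have hA : ∑ i, ∑ j, (C*C) i j * (C*C) i j = ∑ i, ev i ^ 4 := by
      rw [← hC4, trace_entries]
      exact Finset.sum_congr rfl fun i _ => Finset.sum_congr rfl fun j _ => by rw [hCC_symm]
    have hB2 : ∀ i, ∑ j, (C*C) i j * (if i = j then t / n else 0) = (C*C) i i * (t/n) := by
      intro i
      rw [Finset.sum_eq_single i]
      · simp
      · intro b _ hb; simp [Ne.symm hb]
      · simp
    have hB3 : ∑ i, ∑ j, (C*C) i j * (if i = j then t / n else 0) = t * (t/n) := by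
      have hdiag : ∑ i, (C*C) i i = t := by rw [← hC2]; rfl
      simp only [hB2]
      rw [← Finset.sum_mul, hdiag]
    have hD : ∀ i : Fin n, ∑ j : Fin n, (if i = j then t / n else (0:ℝ)) * (if i = j then t / n else (0:ℝ))
        = (t/n)*(t/n) := by
      intro i
      rw [Finset.sum_eq_single i]
      · simp
      · intro b _ hb; simp [Ne.symm hb]
      · simp
    simp only [hD, Finset.sum_const, Finset.card_univ, Fintype.card_fin, nsmul_eq_mul]
    rw [hA, hB3]
    field_simp
    ring
  -- Cauchy–Schwarz over entries
  have cs : (∑ i, ∑ j, B i j * e i j) ^ 2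
      ≤ (∑ i, ∑ j, (B i j) ^ 2) * (∑ i, ∑ j, e i j ^ 2) := by
    have h := Finset.sum_mul_sq_le_sq_mul_sq (Finset.univ : Finset (Fin n × Fin n))
      (fun p => B p.1 p.2) (fun p => e p.1 p.2)
    simpa only [← Finset.sum_product', Fintype.sum_prod_type] using h
  -- scalar inequality for eigenvalues
  have hq : (0:ℝ) < (n:ℝ) * ((n:ℝ) - 1) := by nlinarith
  have scal := scalar_quartic hn ev hev1
  rw [← ht] at scal
  have hSE : ∑ i, ∑ j, e i j ^ 2 ≤ ((n:ℝ)-2)^2 / ((n:ℝ) * ((n:ℝ)-1)) * t ^ 2 := by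
    rw [key2]
    rw [div_mul_eq_mul_div, le_div_iff₀ hq, sub_mul]
    have hne : (n:ℝ) ≠ 0 := ne_of_gt hn0
    have : t ^ 2 / (n:ℝ) * ((n:ℝ) * ((n:ℝ)-1)) = t^2 * ((n:ℝ)-1) := by
      field_simp
    rw [this]
    nlinarith [scal]
  -- put it together
  set d : ℝ := ((n : ℝ) - 2) / Real.sqrt ((n:ℝ) * ((n:ℝ) - 1)) with hd
  have hsq_pos : 0 < Real.sqrt ((n:ℝ) * ((n:ℝ)-1)) := Real.sqrt_pos.mpr hq
  have hd0 : 0 ≤ d := div_nonneg (by linarith) hsq_pos.le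
  have hdt : Real.sqrt (∑ i, ∑ j, e i j ^ 2) ≤ d * t := by
    have hdt2 : (d * t)^2 = ((n:ℝ)-2)^2 / ((n:ℝ) * ((n:ℝ)-1)) * t ^ 2 := by
      rw [hd, mul_pow, div_pow, Real.sq_sqrt hq.le]
    have h1 : ∑ i, ∑ j, e i j ^ 2 ≤ (d*t)^2 := by rw [hdt2]; exact hSE
    calc Real.sqrt (∑ i, ∑ j, e i j ^ 2) ≤ Real.sqrt ((d*t)^2) := Real.sqrt_le_sqrt h1
      _ = d * t := Real.sqrt_sq (mul_nonneg hd0 ht0)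
  have hSB0 : (0:ℝ) ≤ ∑ i, ∑ j, (B i j)^2 := by positivity
  have habs : |(B * C * C).trace| ≤ Real.sqrt (∑ i, ∑ j, (B i j)^2) * (d * t) := by
    rw [← key1]
    have h1 : |∑ i, ∑ j, B i j * e i j|
        = Real.sqrt ((∑ i, ∑ j, B i j * e i j)^2) := (Real.sqrt_sq_eq_abs _).symm
    rw [h1]
    calc Real.sqrt ((∑ i, ∑ j, B i j * e i j)^2)
        ≤ Real.sqrt ((∑ i, ∑ j, (B i j)^2) * (∑ i, ∑ j, e i j ^ 2)) := Real.sqrt_le_sqrt cs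
      _ = Real.sqrt (∑ i, ∑ j, (B i j)^2) * Real.sqrt (∑ i, ∑ j, e i j ^ 2) :=
          Real.sqrt_mul hSB0 _
      _ ≤ Real.sqrt (∑ i, ∑ j, (B i j)^2) * (d * t) := by
          exact mul_le_mul_of_nonneg_left hdt (Real.sqrt_nonneg _)
  calc |(B * C * C).trace| ≤ Real.sqrt (∑ i, ∑ j, (B i j)^2) * (d * t) := habs
    _ = d * Real.sqrt (∑ i, ∑ j, (B i j)^2) * (Real.sqrt (∑ i, ∑ j, (C i j)^2))^2 := by
        rw [hSC, Real.sq_sqrt ht0]; ring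
end

section
/- Let n ≥ 1 be an integer and let L, ν, P, Q, R be real numbers with L ≥ 0, L ≠ 1, P ≥ 0, R ≥ 0, Q² ≤ P·R, and 0 < ν ≤ 1 + 2/n − L. If (1 + 2/n)·P ≤ L·(P + 2Q + R) − 2Q, then P ≤ ρ·R, where ρ = ( L + 2(L−1)²/ν ) / ( 1 + 2/n − L − ν/2 ). (In particular the denominator 1 + 2/n − L − ν/2 is positive.) -/
/-- The real-number manipulation underlying the cut-off argument: if `L ≥ 0`,
`L ≠ 1`, `P, R ≥ 0`, `Q² ≤ P R`, `0 < ν ≤ 1 + 2/n − L` and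
`(1 + 2/n) P ≤ L (P + 2Q + R) − 2Q`, then the denominator
`1 + 2/n − L − ν/2` is positive and `P ≤ ρ R` with
`ρ = (L + 2(L−1)²/ν) / (1 + 2/n − L − ν/2)`. -/
theorem stmt_6 (n : ℕ) (hn : 1 ≤ n) (L ν P Q R : ℝ)
    (hL0 : 0 ≤ L) (hL1 : L ≠ 1) (hP : 0 ≤ P) (hR : 0 ≤ R)
    (hQ : Q ^ 2 ≤ P * R) (hν0 : 0 < ν) (hν : ν ≤ 1 + 2 / n - L)
    (h : (1 + 2 / (n : ℝ)) * P ≤ L * (P + 2 * Q + R) - 2 * Q) :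
    0 < 1 + 2 / (n : ℝ) - L - ν / 2 ∧
      P ≤ (L + 2 * (L - 1) ^ 2 / ν) / (1 + 2 / (n : ℝ) - L - ν / 2) * R := by
  have hden : 0 < 1 + 2 / (n : ℝ) - L - ν / 2 := by linarith
  refine ⟨hden, ?_⟩
  -- key Cauchy-Schwarz/AM-GM step: 2(L-1)Q·ν ≤ (ν²/2) P + 2(L-1)² R
  have key : 2 * (L - 1) * Q * ν ≤ (ν / 2) * P * ν + (2 * (L - 1) ^ 2) * R := by
    rcases eq_or_lt_of_le hR with hR0 | hR0
    · have hQ0 : Q = 0 := by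
        have : Q ^ 2 ≤ 0 := by rw [← hR0] at hQ; simpa using hQ
        nlinarith [sq_nonneg Q]
      rw [hQ0, ← hR0]
      nlinarith [mul_nonneg (mul_nonneg hν0.le hν0.le) hP]
    · nlinarith [sq_nonneg (ν * Q - 2 * (L - 1) * R), hQ, hR0,
        mul_le_mul_of_nonneg_left hQ (mul_nonneg hν0.le hν0.le)]
  -- hence den * P ≤ num * R
  have h2 : (1 + 2 / (n : ℝ) - L - ν / 2) * P * ν ≤ (L * ν + 2 * (L - 1) ^ 2) * R := by
    nlinarith [mul_le_mul_of_nonneg_right h hν0.le, key]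
  have hnum : L + 2 * (L - 1) ^ 2 / ν = (L * ν + 2 * (L - 1) ^ 2) / ν := by
    field_simp
  have hmain : (1 + 2 / (n : ℝ) - L - ν / 2) * P ≤ (L + 2 * (L - 1) ^ 2 / ν) * R := by
    rw [hnum, div_mul_eq_mul_div, le_div_iff₀ hν0]
    linarith
  rw [div_mul_eq_mul_div, le_div_iff₀ hden]
  linarith
end
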